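/- With I' ∈ ℝ^{(N+1)×3} of rank 3, P the orthogonal projector onto Null(I'ᵀ), and h₀ ∈ Null(I'ᵀ)^⊥ fixed, the minimum of ‖h - f̃‖ over h with h - h₀ ∈ Null(I'ᵀ) and ‖h‖² = ‖f‖², assuming ‖h₀‖ ≤ ‖f‖ and P f̃ ≠ 0, equals √( (‖h - h₀‖ - ‖P f̃‖)² + ‖(Id-P) f̃ - h₀‖² ) attained iff h - h₀ is a nonnegative multiple of P f̃ with ‖h - h₀‖² = ‖f‖² - ‖h₀‖². -/

import Mathlib

open Matrix

set_option maxHeartbeats 1000000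

/-- View a plain vector as an element of Euclidean space (same underlying function). -/
def toE {n : ℕ} (v : Fin n → ℝ) : EuclideanSpace ℝ (Fin n) := WithLp.toLp 2 v

/-- View an element of Euclidean space as a plain vector. -/
def ofE {n : ℕ} (v : EuclideanSpace ℝ (Fin n)) : Fin n → ℝ := v

lemma inner_toE {n : ℕ} (u v : Fin n → ℝ) :
    (inner ℝ (toE u) (toE v) : ℝ) = u ⬝ᵥ v := by
  simp [toE, PiLp.inner_apply, dotProduct, mul_comm]

lemma aux_min {E : Type*} [NormedAddCommGroup E] [InnerProductSpace ℝ E]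
    (u b v : E) (horth : (inner ℝ (u - b) v : ℝ) = 0) (hb : b ≠ 0) :
    (Real.sqrt ((‖u‖ - ‖b‖) ^ 2 + ‖v‖ ^ 2) ≤ ‖(u - b) + v‖) ∧
    (‖(u - b) + v‖ = Real.sqrt ((‖u‖ - ‖b‖) ^ 2 + ‖v‖ ^ 2) ↔
      ∃ α : ℝ, 0 ≤ α ∧ u = α • b) := by
  have hpyth : ‖(u - b) + v‖ ^ 2 = ‖u - b‖ ^ 2 + ‖v‖ ^ 2 := by
    rw [norm_add_sq_real, horth]; ring
  have hub : ‖u - b‖ ^ 2 = ‖u‖ ^ 2 - 2 * (inner ℝ u b : ℝ) + ‖b‖ ^ 2 := by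
    exact norm_sub_sq_real u b
  have hcs := real_inner_le_norm u b
  have hbne : ‖b‖ ≠ 0 := norm_ne_zero_iff.mpr hb
  constructor
  · rw [show ‖(u - b) + v‖ = Real.sqrt (‖(u - b) + v‖ ^ 2) from
      (Real.sqrt_sq (norm_nonneg _)).symm]
    apply Real.sqrt_le_sqrt
    rw [hpyth, hub]; nlinarith
  constructor
  · intro heq
    have hS : (0 : ℝ) ≤ (‖u‖ - ‖b‖) ^ 2 + ‖v‖ ^ 2 := by positivity
    have h1 : ‖(u - b) + v‖ ^ 2 = (‖u‖ - ‖b‖) ^ 2 + ‖v‖ ^ 2 := by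
      rw [heq, Real.sq_sqrt hS]
    have hip : (inner ℝ u b : ℝ) = ‖u‖ * ‖b‖ := by nlinarith
    have hray : ‖b‖ • u = ‖u‖ • b := inner_eq_norm_mul_iff_real.mp hip
    refine ⟨‖u‖ / ‖b‖, by positivity, ?_⟩
    have h3 := congrArg (fun x : E => (‖b‖)⁻¹ • x) hray
    simp only [smul_smul, inv_mul_cancel₀ hbne, one_smul] at h3
    rw [div_eq_mul_inv, mul_comm]; exact h3
  · rintro ⟨α, hα, rfl⟩
    have hip : (inner ℝ (α • b) b : ℝ) = α * ‖b‖ ^ 2 := by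
      rw [real_inner_smul_left, real_inner_self_eq_norm_sq]
    have hnab : ‖α • b‖ = α * ‖b‖ := by
      rw [norm_smul, Real.norm_eq_abs, abs_of_nonneg hα]
    have h1 : ‖(α • b - b) + v‖ ^ 2 = (‖α • b‖ - ‖b‖) ^ 2 + ‖v‖ ^ 2 := by
      rw [hpyth, hub, hip, hnab]; ring
    rw [show ‖(α • b - b) + v‖ = Real.sqrt (‖(α • b - b) + v‖ ^ 2) from
      (Real.sqrt_sq (norm_nonneg _)).symm, h1]

theorem constrained_minimum_lower_bound (N : ℕ)
    (I' : Matrix (Fin (N + 1)) (Fin 3) ℝ) (hI' : I'.rank = 3)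
    (P : Matrix (Fin (N + 1)) (Fin (N + 1)) ℝ)
    (hP : P = 1 - I' * (I'ᵀ * I')⁻¹ * I'ᵀ)
    (h₀ f ft : EuclideanSpace ℝ (Fin (N + 1)))
    (hperp : P.mulVec h₀ = 0)
    (hcons : ‖h₀‖ ≤ ‖f‖)
    (hPf : toE (P.mulVec ft) ≠ 0) :
    ∀ h : EuclideanSpace ℝ (Fin (N + 1)),
      (h - h₀ : Fin (N + 1) → ℝ) ∈ LinearMap.ker (I'ᵀ).mulVecLin →
      ‖h‖ ^ 2 = ‖f‖ ^ 2 →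
      (Real.sqrt ((‖h - h₀‖ - ‖toE (P.mulVec ft)‖) ^ 2 +
          ‖toE ((1 - P).mulVec ft) - h₀‖ ^ 2) ≤ ‖h - ft‖) ∧
      (‖h - ft‖ =
          Real.sqrt ((‖h - h₀‖ - ‖toE (P.mulVec ft)‖) ^ 2 +
            ‖toE ((1 - P).mulVec ft) - h₀‖ ^ 2) ↔
        ∃ α : ℝ, 0 ≤ α ∧
          h - h₀ = α • toE (P.mulVec ft) ∧
          ‖h - h₀‖ ^ 2 = ‖f‖ ^ 2 - ‖h₀‖ ^ 2) := by
  intro h hker hnorm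
  -- invertibility of I'ᵀ * I'
  have hunit : IsUnit (I'ᵀ * I') := by
    rw [← Matrix.mulVec_surjective_iff_isUnit]
    have htop : LinearMap.range (I'ᵀ * I').mulVecLin = ⊤ := by
      apply Submodule.eq_top_of_finrank_eq
      rw [← Matrix.rank, Matrix.rank_transpose_mul_self, hI']
      simp [Module.finrank_pi]
    intro y
    obtain ⟨x, hx⟩ := LinearMap.range_eq_top.mp htop y
    exact ⟨x, by rw [← Matrix.mulVecLin_apply]; exact hx⟩
  have hdet : IsUnit (I'ᵀ * I').det := (Matrix.isUnit_iff_isUnit_det _).mp hunit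
  have hinv1 : (I'ᵀ * I') * (I'ᵀ * I')⁻¹ = 1 := Matrix.mul_nonsing_inv _ hdet
  -- I'ᵀ * P = 0
  have hIP : I'ᵀ * P = 0 := by
    rw [hP, Matrix.mul_sub, Matrix.mul_one]
    rw [show I'ᵀ * (I' * (I'ᵀ * I')⁻¹ * I'ᵀ) = ((I'ᵀ * I') * (I'ᵀ * I')⁻¹) * I'ᵀ by
      simp only [Matrix.mul_assoc]]
    rw [hinv1, Matrix.one_mul, sub_self]
  -- P is idempotent
  have hPP : P * P = P := by
    have hQQ : (I' * (I'ᵀ * I')⁻¹ * I'ᵀ) * (I' * (I'ᵀ * I')⁻¹ * I'ᵀ)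
        = I' * (I'ᵀ * I')⁻¹ * I'ᵀ := by
      rw [show (I' * (I'ᵀ * I')⁻¹ * I'ᵀ) * (I' * (I'ᵀ * I')⁻¹ * I'ᵀ)
          = I' * ((((I'ᵀ * I')⁻¹ * (I'ᵀ * I')) * (I'ᵀ * I')⁻¹) * I'ᵀ) by
        simp only [Matrix.mul_assoc]]
      rw [Matrix.nonsing_inv_mul _ hdet, Matrix.one_mul, ← Matrix.mul_assoc]
    rw [hP]
    simp only [Matrix.sub_mul, Matrix.mul_sub, Matrix.one_mul, Matrix.mul_one, hQQ]
    abel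
  -- orthogonality principle
  have orth : ∀ u v : Fin (N + 1) → ℝ, I'ᵀ.mulVec u = 0 → P.mulVec v = 0 →
      u ⬝ᵥ v = 0 := by
    intro u v hu hv
    have h1 : P.mulVec v = v - (I' * ((I'ᵀ * I')⁻¹ * I'ᵀ)).mulVec v := by
      rw [hP, Matrix.mul_assoc, Matrix.sub_mulVec, Matrix.one_mulVec]
    rw [hv] at h1
    have hv' : v = (I' * ((I'ᵀ * I')⁻¹ * I'ᵀ)).mulVec v := sub_eq_zero.mp h1.symm
    have hu' : u ᵥ* I' = 0 := by rw [← Matrix.mulVec_transpose]; exact hu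
    calc u ⬝ᵥ v = u ⬝ᵥ ((I' * ((I'ᵀ * I')⁻¹ * I'ᵀ)).mulVec v) := by rw [← hv']
      _ = (u ᵥ* (I' * ((I'ᵀ * I')⁻¹ * I'ᵀ))) ⬝ᵥ v := by rw [Matrix.dotProduct_mulVec]
      _ = ((u ᵥ* I') ᵥ* ((I'ᵀ * I')⁻¹ * I'ᵀ)) ⬝ᵥ v := by rw [Matrix.vecMul_vecMul]
      _ = 0 := by rw [hu', Matrix.zero_vecMul, zero_dotProduct]
  -- function-level facts
  have hkf : I'ᵀ.mulVec (ofE (h - h₀)) = 0 := hker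
  have hIb : I'ᵀ.mulVec (P.mulVec ft) = 0 := by
    rw [Matrix.mulVec_mulVec, hIP, Matrix.zero_mulVec]
  have hIuf : I'ᵀ.mulVec (ofE (h - h₀) - P.mulVec ft) = 0 := by
    rw [Matrix.mulVec_sub, hkf, hIb, sub_self]
  have hPvf : P.mulVec (ofE h₀ - (1 - P).mulVec ft) = 0 := by
    rw [Matrix.mulVec_sub, Matrix.mulVec_mulVec, Matrix.mul_sub, Matrix.mul_one, hPP,
      sub_self, Matrix.zero_mulVec, sub_zero]
    exact hperp
  -- Euclidean-level abbreviations (as equalities, not `set`)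
  have key1 : toE ((1 - P).mulVec ft) = ft - toE (P.mulVec ft) := by
    have : (1 - P).mulVec ft = ofE ft - P.mulVec ft := by
      rw [Matrix.sub_mulVec, Matrix.one_mulVec]; rfl
    rw [this]; ext i; simp [toE, ofE]
  -- the vector v
  have horth : (inner ℝ ((h - h₀) - toE (P.mulVec ft)) (h₀ - toE ((1 - P).mulVec ft)) : ℝ)
      = 0 := by
    have e1 : ((h - h₀) - toE (P.mulVec ft) : EuclideanSpace ℝ (Fin (N + 1)))
        = toE (ofE (h - h₀) - P.mulVec ft) := by ext i; simp [toE, ofE]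
    have e2 : (h₀ - toE ((1 - P).mulVec ft) : EuclideanSpace ℝ (Fin (N + 1)))
        = toE (ofE h₀ - (1 - P).mulVec ft) := by ext i; simp [toE, ofE]
    rw [e1, e2, inner_toE]
    exact orth _ _ hIuf hPvf
  have hd : (h - ft : EuclideanSpace ℝ (Fin (N + 1)))
      = ((h - h₀) - toE (P.mulVec ft)) + (h₀ - toE ((1 - P).mulVec ft)) := by
    rw [key1]; abel
  have hnv : ‖toE ((1 - P).mulVec ft) - h₀‖ = ‖h₀ - toE ((1 - P).mulVec ft)‖ := by
    rw [← norm_neg, neg_sub]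
  -- norm splitting: ‖h - h₀‖² = ‖f‖² - ‖h₀‖²
  have hsplit : ‖h - h₀‖ ^ 2 = ‖f‖ ^ 2 - ‖h₀‖ ^ 2 := by
    have hi0 : (inner ℝ (h - h₀) h₀ : ℝ) = 0 := by
      have e1 : (h - h₀ : EuclideanSpace ℝ (Fin (N + 1)))
          = toE (ofE (h - h₀)) := by ext i; simp [toE, ofE]
      have e2 : (h₀ : EuclideanSpace ℝ (Fin (N + 1))) = toE (ofE h₀) := by ext i; simp [toE, ofE]
      rw [e1, e2, inner_toE]
      exact orth _ _ hkf hperp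
    have hhu : (h : EuclideanSpace ℝ (Fin (N + 1))) = (h - h₀) + h₀ := by abel
    have h2 : ‖h‖ ^ 2 = ‖h - h₀‖ ^ 2 + ‖h₀‖ ^ 2 := by
      conv_lhs => rw [hhu]
      rw [norm_add_sq_real, hi0]; ring
    rw [hnorm] at h2; linarith
  -- apply the abstract lemma
  obtain ⟨hle, hiff⟩ := aux_min (h - h₀) (toE (P.mulVec ft)) (h₀ - toE ((1 - P).mulVec ft))
    horth hPf
  rw [← hd] at hle hiff
  constructor
  · rw [hnv]; exact hle
  · rw [hnv]
    constructor
    · intro heq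
      obtain ⟨α, hα, hcol⟩ := hiff.mp heq
      exact ⟨α, hα, hcol, hsplit⟩
    · rintro ⟨α, hα, hcol, -⟩
      exact hiff.mpr ⟨α, hα, hcol⟩
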